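/- Let G be an abelian group, F a field, and L a G-graded Lie algebra over F, i.e. L = ⊕_{g∈G} L_g with [L_g, L_h] ⊆ L_{g+h}. Let ε: G×G → F be any map, and let [·,·]^ε be the unique bilinear product on L with [x,y]^ε = ε(g,h)[x,y] for x ∈ L_g, y ∈ L_h. Then (L, [·,·]^ε) is a Lie algebra (i.e. ε is a graded contraction of the grading) if and only if for all g, h, k ∈ G and all x ∈ L_g, y ∈ L_h, z ∈ L_k: (a1) (ε(g,h) − ε(h,g))[x,y] = 0, and (a2) (ε(g,h,k) − ε(k,g,h))[x,[y,z]] + (ε(h,k,g) − ε(k,g,h))[y,[z,x]] = 0, where ε(g,h,k) := ε(g, h+k)ε(h,k). -/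

import Mathlib

/-! Both Lie axioms for `B` are multilinear conditions, so it suffices to check them on homogeneous
elements, which span `L`. For alternation this takes one extra step: skew-symmetry does not imply
`B x x = 0` in characteristic 2, but skew-symmetry together with `B x x = ε(g,g)[x,x] = 0` for
homogeneous `x` does. On homogeneous elements `B x y + B y x = (ε(g,h) - ε(h,g))[x,y]`, and the
Jacobiator of `B` is `ε(g,h,k)[x,[y,z]] + ε(h,k,g)[y,[z,x]] + ε(k,g,h)[z,[x,y]]`; eliminating
`[z,[x,y]]` by the Jacobi identity of `L` leaves the expression in (a2). -/

namespace LinearMap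

variable {R M ι : Type*} [CommSemiring R] [AddCommMonoid M] [Module R M] {ℳ : ι → Submodule R M}

section Ext

variable {N : Type*} [AddCommMonoid N] [Module R N]

theorem ext_of_iSup_eq_top (hℳ : ⨆ i, ℳ i = ⊤) {f g : M →ₗ[R] N}
    (h : ∀ i, ∀ x ∈ ℳ i, f x = g x) : f = g :=
  ext_on (s := ⋃ i, (ℳ i : Set M)) (by rw [← Submodule.iSup_eq_span, hℳ])
    fun x hx => (Set.mem_iUnion.1 hx).elim fun i hi => h i x hi

theorem ext₂_of_iSup_eq_top (hℳ : ⨆ i, ℳ i = ⊤) {f g : M →ₗ[R] M →ₗ[R] N}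
    (h : ∀ i j, ∀ x ∈ ℳ i, ∀ y ∈ ℳ j, f x y = g x y) : f = g :=
  ext_of_iSup_eq_top hℳ fun i x hx => ext_of_iSup_eq_top hℳ fun j y hy => h i j x hx y hy

theorem ext₃_of_iSup_eq_top (hℳ : ⨆ i, ℳ i = ⊤) {f g : M →ₗ[R] M →ₗ[R] M →ₗ[R] N}
    (h : ∀ i j k, ∀ x ∈ ℳ i, ∀ y ∈ ℳ j, ∀ z ∈ ℳ k, f x y z = g x y z) : f = g :=
  ext_of_iSup_eq_top hℳ fun i x hx => ext₂_of_iSup_eq_top hℳ fun j k y hy z hz =>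
    h i j k x hx y hy z hz

end Ext

theorem isAlt_of_iSup_eq_top {N : Type*} [AddCommGroup N] [Module R N] (hℳ : ⨆ i, ℳ i = ⊤)
    {B : M →ₗ[R] M →ₗ[R] N} (hskew : B.flip = -B) (h : ∀ i, ∀ x ∈ ℳ i, B x x = 0) :
    B.IsAlt := by
  intro x
  refine Submodule.iSup_induction ℳ (motive := fun x => B x x = 0) (hℳ ▸ Submodule.mem_top) h
    (by simp) fun a b ha hb => ?_
  have hba : B b a = -B a b := congr($hskew a b)
  simp [ha, hb, hba]

def jacobiator (B : M →ₗ[R] M →ₗ[R] M) : M →ₗ[R] M →ₗ[R] M →ₗ[R] M :=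
  (llcomp R M M M ∘ₗ B).compl₂ B + ((llcomp R M M M ∘ₗ B).compl₂ B.flip).flip + B.compr₂ B.flip

@[simp]
theorem jacobiator_apply (B : M →ₗ[R] M →ₗ[R] M) (x y z : M) :
    jacobiator B x y z = B x (B y z) + B y (B z x) + B z (B x y) :=
  rfl

end LinearMap

namespace GGA

section

variable {R G L : Type*} [CommRing R] [LieRing L] [LieAlgebra R L] {ℒ : G → Submodule R L}
  {ε : G → G → R} {B : L →ₗ[R] L →ₗ[R] L}

theorem contraction_add_swap (hB : ∀ g h, ∀ x ∈ ℒ g, ∀ y ∈ ℒ h, B x y = ε g h • ⁅x, y⁆)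
    {g h : G} {x y : L} (hx : x ∈ ℒ g) (hy : y ∈ ℒ h) :
    B x y + B y x = (ε g h - ε h g) • ⁅x, y⁆ := by
  rw [hB g h x hx y hy, hB h g y hy x hx, ← lie_skew x y]
  module

theorem contraction_jacobiator [Add G] (hgraded : ∀ g h, ∀ x ∈ ℒ g, ∀ y ∈ ℒ h, ⁅x, y⁆ ∈ ℒ (g + h))
    (hB : ∀ g h, ∀ x ∈ ℒ g, ∀ y ∈ ℒ h, B x y = ε g h • ⁅x, y⁆)
    {g h k : G} {x y z : L} (hx : x ∈ ℒ g) (hy : y ∈ ℒ h) (hz : z ∈ ℒ k) :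
    B.jacobiator x y z =
      (ε g (h + k) * ε h k - ε k (g + h) * ε g h) • ⁅x, ⁅y, z⁆⁆
        + (ε h (k + g) * ε k g - ε k (g + h) * ε g h) • ⁅y, ⁅z, x⁆⁆ := by
  have hB₂ : ∀ {g h k : G} {x y z : L}, x ∈ ℒ g → y ∈ ℒ h → z ∈ ℒ k →
      B x (B y z) = (ε g (h + k) * ε h k) • ⁅x, ⁅y, z⁆⁆ := fun {g h k x y z} hx hy hz => by
    rw [hB h k y hy z hz, map_smul, hB g (h + k) x hx _ (hgraded h k y hy z hz), smul_smul,
      mul_comm]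
  rw [LinearMap.jacobiator_apply, hB₂ hx hy hz, hB₂ hy hz hx, hB₂ hz hx hy]
  linear_combination (norm := module) (ε k (g + h) * ε g h) • lie_jacobi x y z

end

theorem graded_contraction_criterion
    (F : Type*) [Field F] (G : Type*) [AddCommGroup G] [DecidableEq G]
    (L : Type*) [LieRing L] [LieAlgebra F L]
    (ℒ : G → Submodule F L) (hdecomp : DirectSum.IsInternal ℒ)
    (hgraded : ∀ g h : G, ∀ x ∈ ℒ g, ∀ y ∈ ℒ h, ⁅x, y⁆ ∈ ℒ (g + h))
    (ε : G → G → F) (B : L →ₗ[F] L →ₗ[F] L)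
    (hB : ∀ g h : G, ∀ x ∈ ℒ g, ∀ y ∈ ℒ h, B x y = ε g h • ⁅x, y⁆) :
    ((∀ x : L, B x x = 0) ∧
        ∀ x y z : L, B x (B y z) + B y (B z x) + B z (B x y) = 0)
      ↔ ((∀ g h : G, ∀ x ∈ ℒ g, ∀ y ∈ ℒ h, (ε g h - ε h g) • ⁅x, y⁆ = 0) ∧
          (∀ g h k : G, ∀ x ∈ ℒ g, ∀ y ∈ ℒ h, ∀ z ∈ ℒ k,
            (ε g (h + k) * ε h k - ε k (g + h) * ε g h) • ⁅x, ⁅y, z⁆⁆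
              + (ε h (k + g) * ε k g - ε k (g + h) * ε g h) • ⁅y, ⁅z, x⁆⁆ = 0)) := by
  have hℒ := hdecomp.submodule_iSup_eq_top
  constructor
  · rintro ⟨halt, hjac⟩
    refine ⟨fun g h x hx y hy => ?_, fun g h k x hx y hy z hz => ?_⟩
    · rw [← contraction_add_swap hB hx hy, ← LinearMap.IsAlt.neg halt, neg_add_cancel]
    · rw [← contraction_jacobiator hgraded hB hx hy hz]
      exact hjac x y z
  · rintro ⟨hskew, hjac⟩
    have hflip : B.flip = -B := LinearMap.ext₂_of_iSup_eq_top hℒ fun g h x hx y hy => by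
      rw [LinearMap.flip_apply, LinearMap.neg_apply, LinearMap.neg_apply, eq_neg_iff_add_eq_zero,
        add_comm, contraction_add_swap hB hx hy, hskew g h x hx y hy]
    have hzero : B.jacobiator = 0 := LinearMap.ext₃_of_iSup_eq_top hℒ fun g h k x hx y hy z hz => by
      rw [contraction_jacobiator hgraded hB hx hy hz, hjac g h k x hx y hy z hz]
      rfl
    refine ⟨LinearMap.isAlt_of_iSup_eq_top hℒ hflip fun g x hx => ?_, fun x y z => ?_⟩
    · rw [hB g g x hx x hx, lie_self, smul_zero]
    · simpa using congr($hzero x y z)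

end GGA
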